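/- Let N = 2n ≥ 2 be even and work in C_{N,3} with the sequences X and Y of unit-demand flows. For every routing r_X of the flows of X and every routing r_Y of the flows of Y such that r_X and r_Y agree on the flows of the common prefix X1, at least one of the two routings has congestion at least 2: max(congestion(r_X), congestion(r_Y)) ≥ 2. -/

import Mathlib

open Finset

/-- Congestion of a routing `r` of a finite family of flows in the Clos network
`C_{N,R}`. -/
noncomputable def congestion {F : Type*} [Fintype F] {N R : ℕ}
    (inp out : F → Fin R) (dem : F → ℝ) (r : F → Fin N) : ℝ :=
  ⨆ p : Fin R × Fin N,
    max (∑ f ∈ Finset.univ.filter (fun f => inp f = p.1 ∧ r f = p.2), dem f)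
        (∑ f ∈ Finset.univ.filter (fun f => out f = p.1 ∧ r f = p.2), dem f)

/-- Flows of sequence `X` in `C_{2n,3}`: the common prefix `X1` (`n` flows `(I₁,O₁)`
and `n` flows `(I₂,O₂)`) followed by `X2` (`n` flows `(I₁,O₂)`). -/
def xInp {n : ℕ} : (Fin n ⊕ Fin n) ⊕ Fin n → Fin 3 :=
  Sum.elim (Sum.elim (fun _ => 0) (fun _ => 1)) (fun _ => 0)

def xOut {n : ℕ} : (Fin n ⊕ Fin n) ⊕ Fin n → Fin 3 :=
  Sum.elim (Sum.elim (fun _ => 0) (fun _ => 1)) (fun _ => 1)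

/-- Flows of sequence `Y` in `C_{2n,3}`: the common prefix `X1` followed by `Y2`
(`n` flows `(I₃,O₁)` and `n` flows `(I₃,O₂)`). -/
def yInp {n : ℕ} : (Fin n ⊕ Fin n) ⊕ (Fin n ⊕ Fin n) → Fin 3 :=
  Sum.elim (Sum.elim (fun _ => 0) (fun _ => 1)) (Sum.elim (fun _ => 2) (fun _ => 2))

def yOut {n : ℕ} : (Fin n ⊕ Fin n) ⊕ (Fin n ⊕ Fin n) → Fin 3 :=
  Sum.elim (Sum.elim (fun _ => 0) (fun _ => 1)) (Sum.elim (fun _ => 0) (fun _ => 1))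

lemma two_le_congestion_of_pair {F : Type*} [Fintype F] {N R : ℕ}
    (inp out : F → Fin R) (r : F → Fin N) {f g : F} (hfg : f ≠ g)
    (hr : r f = r g)
    (h : inp f = inp g ∨ out f = out g) :
    2 ≤ congestion inp out (fun _ => (1 : ℝ)) r := by
  classical
  have hb : BddAbove (Set.range fun p : Fin R × Fin N =>
      max (∑ x ∈ Finset.univ.filter (fun x => inp x = p.1 ∧ r x = p.2), (1:ℝ))
          (∑ x ∈ Finset.univ.filter (fun x => out x = p.1 ∧ r x = p.2), (1:ℝ))) :=
    Finite.bddAbove_range _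
  rcases h with hi | ho
  · refine le_trans ?_ (le_ciSup hb (inp f, r f))
    refine le_max_of_le_left ?_
    have hsub : ({f, g} : Finset F) ⊆
        Finset.univ.filter (fun x => inp x = inp f ∧ r x = r f) := by
      intro x hx
      simp only [Finset.mem_insert, Finset.mem_singleton] at hx
      rcases hx with rfl | rfl <;> simp [hi.symm, hr.symm]
    calc (2:ℝ) = ∑ _x ∈ ({f, g} : Finset F), (1:ℝ) := by
          rw [Finset.sum_const, Finset.card_pair hfg]; norm_num
      _ ≤ _ := Finset.sum_le_sum_of_subset_of_nonneg hsub (by intros; norm_num)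
  · refine le_trans ?_ (le_ciSup hb (out f, r f))
    refine le_max_of_le_right ?_
    have hsub : ({f, g} : Finset F) ⊆
        Finset.univ.filter (fun x => out x = out f ∧ r x = r f) := by
      intro x hx
      simp only [Finset.mem_insert, Finset.mem_singleton] at hx
      rcases hx with rfl | rfl <;> simp [ho.symm, hr.symm]
    calc (2:ℝ) = ∑ _x ∈ ({f, g} : Finset F), (1:ℝ) := by
          rw [Finset.sum_const, Finset.card_pair hfg]; norm_num
      _ ≤ _ := Finset.sum_le_sum_of_subset_of_nonneg hsub (by intros; norm_num)

lemma inj_of_lt_two {F : Type*} [Fintype F] {N R : ℕ}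
    (inp out : F → Fin R) (r : F → Fin N)
    (hc : congestion inp out (fun _ => (1 : ℝ)) r < 2) :
    (∀ f g, inp f = inp g → r f = r g → f = g) ∧
    (∀ f g, out f = out g → r f = r g → f = g) := by
  constructor
  · intro f g h1 h2
    by_contra hne
    exact absurd (two_le_congestion_of_pair inp out r hne h2 (Or.inl h1)) (not_le.mpr hc)
  · intro f g h1 h2
    by_contra hne
    exact absurd (two_le_congestion_of_pair inp out r hne h2 (Or.inr h1)) (not_le.mpr hc)

/-- For every routing `rX` of the (unit-demand) flows of `X` and every routing `rY`
of the flows of `Y` agreeing on the common prefix `X1`, at least one of the two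
routings has congestion at least `2`. -/
theorem prefix_agreement_forces_congestion_two {n : ℕ} (hn : 1 ≤ n)
    (rX : (Fin n ⊕ Fin n) ⊕ Fin n → Fin (2 * n))
    (rY : (Fin n ⊕ Fin n) ⊕ (Fin n ⊕ Fin n) → Fin (2 * n))
    (hagree : ∀ p : Fin n ⊕ Fin n, rX (Sum.inl p) = rY (Sum.inl p)) :
    2 ≤ max (congestion xInp xOut (fun _ => (1 : ℝ)) rX)
            (congestion yInp yOut (fun _ => (1 : ℝ)) rY) := by
  by_contra hlt
  push_neg at hlt
  rw [max_lt_iff] at hlt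
  obtain ⟨hX, hY⟩ := hlt
  obtain ⟨hXi, hXo⟩ := inj_of_lt_two _ _ _ hX
  obtain ⟨hYi, hYo⟩ := inj_of_lt_two _ _ _ hY
  -- F2 : flows B and C of X, all using output O₂
  set F2 : Fin n ⊕ Fin n → Fin (2 * n) :=
    fun s => rX (Sum.map Sum.inr id s) with hF2
  have hF2inj : Function.Injective F2 := by
    intro s t hst
    have h1 : xOut (Sum.map Sum.inr (id : Fin n → Fin n) s)
        = xOut (Sum.map Sum.inr id t) := by
      cases s <;> cases t <;> rfl
    have := hXo _ _ h1 hst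
    exact (Sum.inr_injective.sumMap Function.injective_id) this
  have hcard : Fintype.card (Fin n ⊕ Fin n) = Fintype.card (Fin (2 * n)) := by
    simp [two_mul]
  have hF2surj : Function.Surjective F2 :=
    ((Fintype.bijective_iff_injective_and_card F2).mpr ⟨hF2inj, hcard⟩).2
  -- G1 : flows D and E of Y, all using input I₃
  set G1 : Fin n ⊕ Fin n → Fin (2 * n) := fun s => rY (Sum.inr s) with hG1
  have hG1inj : Function.Injective G1 := by
    intro s t hst
    have h1 : yInp (Sum.inr s : (Fin n ⊕ Fin n) ⊕ (Fin n ⊕ Fin n))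
        = yInp (Sum.inr t) := by
      cases s <;> cases t <;> rfl
    have := hYi _ _ h1 hst
    exact Sum.inr_injective this
  have hG1surj : Function.Surjective G1 :=
    ((Fintype.bijective_iff_injective_and_card G1).mpr ⟨hG1inj, hcard⟩).2
  -- take the first flow of A
  set i : Fin n := ⟨0, hn⟩
  obtain ⟨s, hs⟩ := hF2surj (rX (Sum.inl (Sum.inl i)))
  rcases s with b | c
  · -- the middle switch of A_i is also used by B_b in rX, hence in rY
    have hsb : rX (Sum.inl (Sum.inr b)) = rX (Sum.inl (Sum.inl i)) := hs
    have hYb : rY (Sum.inl (Sum.inr b)) = rY (Sum.inl (Sum.inl i)) := by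
      rw [← hagree, ← hagree]; exact hsb
    obtain ⟨t, ht⟩ := hG1surj (rY (Sum.inl (Sum.inl i)))
    rcases t with d | e
    · -- D_d shares output O₁ and the middle switch with A_i in rY
      have hd : rY (Sum.inr (Sum.inl d)) = rY (Sum.inl (Sum.inl i)) := ht
      have := hYo (Sum.inr (Sum.inl d)) (Sum.inl (Sum.inl i)) rfl hd
      exact Sum.inr_ne_inl this
    · -- E_e shares output O₂ and the middle switch with B_b in rY
      have he : rY (Sum.inr (Sum.inr e)) = rY (Sum.inl (Sum.inr b)) := by
        rw [hYb]; exact ht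
      have := hYo (Sum.inr (Sum.inr e)) (Sum.inl (Sum.inr b)) rfl he
      exact Sum.inr_ne_inl this
  · -- C_c shares input I₁ and the middle switch with A_i in rX
    have hc : rX (Sum.inr c) = rX (Sum.inl (Sum.inl i)) := hs
    have := hXi (Sum.inr c) (Sum.inl (Sum.inl i)) rfl hc
    exact Sum.inr_ne_inl this
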